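/- arXiv:0704.1914 — 8 statements merged into one kernel-verified Lean document; each statement's English description precedes it below -/
import Mathlib

section
/- The commutator subgroup K_3 of the braid group B_3 is a free group of rank 2; more precisely, the group homomorphism from the free group on two generators FreeGroup (Fin 2) to B_3 sending the first generator to σ_2 σ_1⁻¹ and the second generator to σ_1⁻¹ σ_2 is injective and its range equals K_3. -/
def braidRels (n : ℕ) : Set (FreeGroup (Fin (n - 1))) :=
  {r | (∃ i j : Fin (n - 1), 2 ≤ |(i : ℤ) - (j : ℤ)| ∧
        r = FreeGroup.of i * FreeGroup.of j * (FreeGroup.of i)⁻¹ * (FreeGroup.of j)⁻¹) ∨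
       (∃ i j : Fin (n - 1), |(i : ℤ) - (j : ℤ)| = 1 ∧
        r = FreeGroup.of i * FreeGroup.of j * FreeGroup.of i *
            (FreeGroup.of j)⁻¹ * (FreeGroup.of i)⁻¹ * (FreeGroup.of j)⁻¹)}

/-- The braid group `B n` on `n` strands, presented with generators `σ_1, …, σ_{n-1}`. -/
abbrev BraidGroup (n : ℕ) : Type := PresentedGroup (braidRels n)

/-- The generator `σ_{i+1}` of the braid group. -/
def braidGen {n : ℕ} (i : Fin (n - 1)) : BraidGroup n := PresentedGroup.of i

/-!
Put `a = σ₂σ₁⁻¹` and `b = σ₁⁻¹σ₂`. The braid relation shows that conjugation by `σ₁` maps `a ↦ b⁻¹a`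
and `b ↦ a`; on the free group `F(a, b)` these formulas define an automorphism, hence a semidirect
product `F(a, b) ⋊ ℤ`. In it `t` and `a t` (`t` the generator of `ℤ`) satisfy the braid relation,
which gives `ψ : B₃ → F(a, b) ⋊ ℤ` with `σ₁ ↦ t`, `σ₂ ↦ a t`, and `(w, tⁿ) ↦ w(a, b) σ₁ⁿ` is a left
inverse of `ψ`. Since `ψ` sends the words `w(a, b)` of `B₃` to `(w, 1)`, they form a free group.
A commutator `y` dies in `ℤ`, so `ψ y = (w, 1)` and `y = w(a, b)`; conversely `a` and `b` are
commutators because `σ₁` and `σ₂` become equal in the abelianization.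
-/

theorem MonoidHom.map_mulAut_zpow_apply {M N : Type*} [MulOneClass M] [MulOneClass N] (f : M →* N)
    {α : MulAut M} {β : MulAut N} (h : ∀ x, f (α x) = β (f x)) (n : ℤ) (x : M) :
    f ((α ^ n) x) = (β ^ n) (f x) := by
  induction n using Int.induction_on generalizing x with
  | zero => rfl
  | succ k ih => rw [zpow_add_one, zpow_add_one, MulAut.mul_apply, MulAut.mul_apply, ih, h]
  | pred k ih =>
    rw [zpow_sub_one, zpow_sub_one, MulAut.mul_apply, MulAut.mul_apply, ih]
    conv_rhs => rw [← MulAut.apply_inv_self M α x, h, MulAut.inv_apply_self]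

local notation "σ₁" => braidGen (n := 3) 0
local notation "σ₂" => braidGen (n := 3) 1

namespace BraidGroup

theorem braid_rel_three : σ₁ * σ₂ * σ₁ = σ₂ * σ₁ * σ₂ := by
  have h : σ₁ * σ₂ * σ₁ * σ₂⁻¹ * σ₁⁻¹ * σ₂⁻¹ = 1 :=
    PresentedGroup.one_of_mem (Or.inr ⟨0, 1, by norm_num, rfl⟩)
  rw [← mul_inv_eq_one, ← h]
  group

theorem abelianization_of_braidGen_eq : Abelianization.of σ₁ = Abelianization.of σ₂ := by
  have h := congrArg Abelianization.of braid_rel_three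
  simp only [map_mul] at h
  rw [mul_comm (Abelianization.of σ₁)] at h
  exact mul_left_cancel h

section UniversalProperty

variable {H : Type*} [Group H]

theorem lift_eq_one_of_mem_braidRels_three {f : Fin 2 → H}
    (h : f 0 * f 1 * f 0 = f 1 * f 0 * f 1) {r : FreeGroup (Fin 2)} (hr : r ∈ braidRels 3) :
    FreeGroup.lift f r = 1 := by
  rcases hr with ⟨i, j, hij, rfl⟩ | ⟨i, j, hij, rfl⟩
  · fin_cases i <;> fin_cases j <;> norm_num at hij
  · fin_cases i <;> fin_cases j <;> norm_num at hij
    · simp [h]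
    · simp [← h]

theorem hom_ext_three {f g : BraidGroup 3 →* H} (h₁ : f σ₁ = g σ₁) (h₂ : f σ₂ = g σ₂) :
    f = g :=
  PresentedGroup.ext fun i ↦ by fin_cases i <;> assumption

variable (a b : H) (h : a * b * a = b * a * b)

def liftThree : BraidGroup 3 →* H :=
  PresentedGroup.toGroup (f := ![a, b]) fun _ ↦ lift_eq_one_of_mem_braidRels_three h

@[simp]
theorem liftThree_braidGen_zero : liftThree a b h σ₁ = a :=
  PresentedGroup.toGroup.of _

@[simp]
theorem liftThree_braidGen_one : liftThree a b h σ₂ = b :=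
  PresentedGroup.toGroup.of _

end UniversalProperty

open FreeGroup

def commutatorBasis : FreeGroup (Fin 2) →* BraidGroup 3 := FreeGroup.lift ![σ₂ * σ₁⁻¹, σ₁⁻¹ * σ₂]

@[simp]
theorem commutatorBasis_of_zero : commutatorBasis (of 0) = σ₂ * σ₁⁻¹ := rfl

@[simp]
theorem commutatorBasis_of_one : commutatorBasis (of 1) = σ₁⁻¹ * σ₂ := rfl

theorem range_commutatorBasis_le : commutatorBasis.range ≤ commutator (BraidGroup 3) := by
  rw [← Abelianization.ker_of]
  refine range_lift_le ?_
  rintro _ ⟨i, rfl⟩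
  rw [SetLike.mem_coe, MonoidHom.mem_ker]
  fin_cases i <;> simp [abelianization_of_braidGen_eq]

/-- Conjugation by `σ₁`, read in the basis `a = σ₂σ₁⁻¹`, `b = σ₁⁻¹σ₂` of `K₃`. -/
def conjAut : MulAut (FreeGroup (Fin 2)) :=
  MonoidHom.toMulEquiv (FreeGroup.lift ![(of 1)⁻¹ * of 0, of 0])
    (FreeGroup.lift ![of 1, of 1 * (of 0)⁻¹])
    (by ext i; fin_cases i <;> simp) (by ext i; fin_cases i <;> simp)

@[simp]
theorem conjAut_of_zero : conjAut (of 0) = (of 1)⁻¹ * of 0 := rfl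

@[simp]
theorem conjAut_of_one : conjAut (of 1) = of 0 := rfl

@[simp]
theorem conjAut_symm_of_zero : conjAut.symm (of 0) = of 1 := rfl

theorem commutatorBasis_conjAut (x : FreeGroup (Fin 2)) :
    commutatorBasis (conjAut x) = MulAut.conj σ₁ (commutatorBasis x) := by
  suffices commutatorBasis.comp conjAut.toMonoidHom =
      (MulAut.conj σ₁).toMonoidHom.comp commutatorBasis from DFunLike.congr_fun this x
  ext i
  fin_cases i
  · calc (σ₁⁻¹ * σ₂)⁻¹ * (σ₂ * σ₁⁻¹) = σ₂⁻¹ * (σ₁ * σ₂ * σ₁) * σ₁⁻¹ * σ₁⁻¹ := by group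
      _ = σ₂⁻¹ * (σ₂ * σ₁ * σ₂) * σ₁⁻¹ * σ₁⁻¹ := by rw [braid_rel_three]
      _ = σ₁ * (σ₂ * σ₁⁻¹) * σ₁⁻¹ := by group
  · show σ₂ * σ₁⁻¹ = σ₁ * (σ₁⁻¹ * σ₂) * σ₁⁻¹
    group

abbrev SemidirectModel : Type :=
  FreeGroup (Fin 2) ⋊[zpowersHom (MulAut (FreeGroup (Fin 2))) conjAut] Multiplicative ℤ

open SemidirectProduct

def toSemidirectModel : BraidGroup 3 →* SemidirectModel :=
  liftThree ⟨1, .ofAdd 1⟩ ⟨of 0, .ofAdd 1⟩ (by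
    ext
    · simp [sq]
    · rfl)

def ofSemidirectModel : SemidirectModel →* BraidGroup 3 :=
  SemidirectProduct.lift commutatorBasis (zpowersHom _ σ₁) fun n ↦ by
    ext x
    simp [map_zpow, commutatorBasis.map_mulAut_zpow_apply commutatorBasis_conjAut]

theorem ofSemidirectModel_comp_toSemidirectModel :
    ofSemidirectModel.comp toSemidirectModel = MonoidHom.id _ := by
  apply hom_ext_three
  · simp [toSemidirectModel, ofSemidirectModel]
  · simp [toSemidirectModel, ofSemidirectModel]

theorem toSemidirectModel_comp_commutatorBasis :
    toSemidirectModel.comp commutatorBasis = inl := by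
  refine FreeGroup.ext_hom _ _ fun i ↦ ?_
  fin_cases i <;> ext <;> simp [toSemidirectModel]

theorem commutatorBasis_injective : Function.Injective commutatorBasis := by
  have h : Function.Injective (toSemidirectModel.comp commutatorBasis) := by
    rw [toSemidirectModel_comp_commutatorBasis]
    exact inl_injective
  exact Function.Injective.of_comp (f := toSemidirectModel) h

theorem commutator_le_range_commutatorBasis :
    commutator (BraidGroup 3) ≤ commutatorBasis.range := by
  intro y hy
  have hy_inl : toSemidirectModel y ∈ (inl : FreeGroup (Fin 2) →* SemidirectModel).range := by
    rw [range_inl_eq_ker_rightHom]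
    exact Abelianization.commutator_subset_ker (rightHom.comp toSemidirectModel) hy
  obtain ⟨x, hx⟩ := hy_inl
  refine ⟨x, ?_⟩
  calc commutatorBasis x = ofSemidirectModel (inl x) := (lift_inl _ _ _ x).symm
    _ = ofSemidirectModel (toSemidirectModel y) := by rw [hx]
    _ = y := DFunLike.congr_fun ofSemidirectModel_comp_toSemidirectModel y

end BraidGroup

/-- The commutator subgroup of the braid group on 3 strands is free of rank 2, freely
generated by `σ_2 * σ_1⁻¹` and `σ_1⁻¹ * σ_2`. -/
theorem K3_free_of_rank_two :
    Function.Injective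
      (FreeGroup.lift (fun i : Fin 2 =>
        if i = 0 then braidGen (n := 3) 1 * (braidGen (n := 3) 0)⁻¹
        else (braidGen (n := 3) 0)⁻¹ * braidGen (n := 3) 1)) ∧
    (FreeGroup.lift (fun i : Fin 2 =>
        if i = 0 then braidGen (n := 3) 1 * (braidGen (n := 3) 0)⁻¹
        else (braidGen (n := 3) 0)⁻¹ * braidGen (n := 3) 1)).range
      = commutator (BraidGroup 3) := by
  have hbasis : FreeGroup.lift (fun i : Fin 2 =>
      if i = 0 then braidGen (n := 3) 1 * (braidGen (n := 3) 0)⁻¹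
      else (braidGen (n := 3) 0)⁻¹ * braidGen (n := 3) 1) = BraidGroup.commutatorBasis := by
    refine FreeGroup.ext_hom _ _ fun i ↦ ?_
    fin_cases i <;> rfl
  rw [hbasis]
  exact ⟨BraidGroup.commutatorBasis_injective, le_antisymm
    BraidGroup.range_commutatorBasis_le BraidGroup.commutator_le_range_commutatorBasis⟩
end

section
/- Let Σ be a group and let a : ℤ → Σ be a representation sequence which is p-periodic for some p ≥ 1. Then the product a(0) · a(1) · ⋯ · a(p−1) equals 1. -/
/-- If `a : ℤ → S` is a representation sequence (`a m * a (m+2) = a (m+1)`) that is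
`p`-periodic for some `p ≥ 1`, then the ordered product `a 0 * a 1 * ⋯ * a (p-1)` is `1`. -/
theorem rep_seq_periodic_prod_eq_one (S : Type) [Group S] (a : ℤ → S) (p : ℕ) (hp : 1 ≤ p)
    (hrep : ∀ m : ℤ, a m * a (m + 2) = a (m + 1))
    (hper : ∀ m : ℤ, a (m + p) = a m) :
    ((List.range p).map (fun i => a (i : ℤ))).prod = 1 := by
  have key : ∀ n : ℕ, ((List.range n).map (fun i => a (i : ℤ))).prod = a 1 * (a (n + 1))⁻¹ := by
    intro n
    induction n with
    | zero => simp
    | succ n ih =>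
      rw [List.range_succ]
      simp only [List.bind_eq_flatMap] at *
      rw [List.flatMap_append, List.map_append, List.prod_append, ih]
      have h := hrep n
      have : a n = a (n + 1) * (a (n + 2))⁻¹ := by
        rw [eq_comm, mul_inv_eq_iff_eq_mul, eq_comm]
        rw [← h]
      simp only [List.flatMap_cons, List.flatMap_nil, List.append_nil, List.map_cons,
        List.map_nil, List.prod_cons, List.prod_nil, mul_one, pure, List.singleton]
      rw [this]
      push_cast
      group
  rw [key p]
  have := hper 1
  rw [add_comm] at this
  rw [this, mul_inv_cancel]
end

section
/- Let Σ be a group, let a : ℤ → Σ be a representation sequence which is p-periodic for some p ≥ 1, and let b ∈ Σ satisfy a(m) · b · a(m+2) = b · a(m+1) · b for all m ∈ ℤ. Then b^p = 1. -/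
/-- If `a : ℤ → S` is a `p`-periodic representation sequence (`p ≥ 1`) and `b ∈ S`
satisfies `a m * b * a (m+2) = b * a (m+1) * b` for all `m`, then `b ^ p = 1`. -/
theorem b_pow_p_eq_one (S : Type) [Group S] (a : ℤ → S) (p : ℕ) (hp : 1 ≤ p) (b : S)
    (hrep : ∀ m : ℤ, a m * a (m + 2) = a (m + 1))
    (hper : ∀ m : ℤ, a (m + p) = a m)
    (hb : ∀ m : ℤ, a m * b * a (m + 2) = b * a (m + 1) * b) :
    b ^ p = 1 := by
  have key : ∀ m : ℤ, a m * b * (a m)⁻¹ = b * (a (m+1) * b * (a (m+1))⁻¹) := by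
    intro m
    have h1 := hrep m
    have h2 := hb m
    have h3 : a (m+2) = (a m)⁻¹ * a (m+1) := by rw [← h1]; group
    have h4 : a m * b * (a m)⁻¹ = (a m * b * a (m+2)) * (a (m+1))⁻¹ := by
      rw [h3]; group
    rw [h2] at h4
    rw [h4]; group
  have claim : ∀ k : ℕ, ∀ m : ℤ,
      a m * b * (a m)⁻¹ = b ^ k * (a (m + k) * b * (a (m + k))⁻¹) := by
    intro k
    induction k with
    | zero => intro m; simp
    | succ n ih =>
      intro m
      have h5 := ih m
      have h6 := key (m + n)
      have h7 : (m + (n + 1 : ℕ) : ℤ) = (m + n) + 1 := by push_cast; ring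
      rw [h7]
      rw [h5, h6]
      rw [pow_succ]
      group
  have h8 := claim p 0
  have h10 : a (p : ℤ) = a 0 := by simpa using hper 0
  rw [zero_add, h10] at h8
  have h9 : b ^ p * (a 0 * b * (a 0)⁻¹) = 1 * (a 0 * b * (a 0)⁻¹) := by
    rw [← h8]; group
  exact mul_right_cancel h9
end

section
/- Let Σ be a group, let a : ℤ → Σ be a representation sequence, and let b₃, b₄ ∈ Σ satisfy: a(m) · b₃ · a(m+2) = b₃ · a(m+1) · b₃ for all m ∈ ℤ; a(m) · b₄ = b₄ · a(m+1) for all m ∈ ℤ; b₃ · b₄ · b₃ = b₄ · b₃ · b₄; and b₃ · b₄ = b₄ · b₃. Then b₃ = 1, b₄ = 1, and a(m) = a(m+1) for all m ∈ ℤ (the encoded representation of K_5 is trivial). -/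
/-- If a representation sequence `a` together with `b₃, b₄` satisfies the `K_5` relations
and moreover `b₃` and `b₄` commute, then the representation is trivial. -/
theorem K5_commuting_implies_trivial (S : Type) [Group S] (a : ℤ → S) (b₃ b₄ : S)
    (hrep : ∀ m : ℤ, a m * a (m + 2) = a (m + 1))
    (hb₃ : ∀ m : ℤ, a m * b₃ * a (m + 2) = b₃ * a (m + 1) * b₃)
    (hb₄ : ∀ m : ℤ, a m * b₄ = b₄ * a (m + 1))
    (hbraid : b₃ * b₄ * b₃ = b₄ * b₃ * b₄)
    (hcomm : b₃ * b₄ = b₄ * b₃) :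
    b₃ = 1 ∧ b₄ = 1 ∧ ∀ m : ℤ, a m = a (m + 1) := by
  have heq : b₃ = b₄ := by
    have h1 : b₃ * b₃ * b₄ = b₃ * b₄ * b₄ := by
      calc b₃ * b₃ * b₄ = b₃ * (b₃ * b₄) := by group
        _ = b₃ * (b₄ * b₃) := by rw [hcomm]
        _ = b₄ * b₃ * b₄ := by rw [← hbraid]; group
        _ = b₃ * b₄ * b₄ := by rw [← hcomm]
    exact mul_left_cancel (mul_right_cancel h1)
  have hconst : ∀ m : ℤ, a (m + 2) = b₄ := by
    intro m
    have h := hb₃ m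
    rw [heq] at h
    have h2 : b₄ * a (m + 1) * a (m + 2) = b₄ * a (m + 1) * b₄ := by
      rw [← hb₄ m] at h ⊢; rw [mul_assoc] at h ⊢; rw [h]
    exact mul_left_cancel (by rw [mul_assoc] at h2 ⊢; exact h2)
  have hall : ∀ m : ℤ, a m = b₄ := by
    intro m
    have := hconst (m - 2)
    rwa [show m - 2 + 2 = m by ring] at this
  have hb4 : b₄ = 1 := by
    have := hrep 0
    rw [hall 0, hall (0 + 2), hall (0 + 1)] at this
    exact mul_left_cancel (by rw [mul_one]; exact this)
  refine ⟨heq.trans hb4, hb4, fun m => ?_⟩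
  rw [hall m, hall (m + 1)]
end

section
/- For every n ≥ 5, the commutator subgroup K_n of the braid group B_n is a perfect group: the commutator subgroup of K_n equals all of K_n (equivalently, K_n / [K_n, K_n] is trivial). -/
/-!
Let `N = ⁅K_n, K_n⁆` and compute in `B_n ⧸ N`, where the image of `K_n` is abelian. Adjacent
generators are conjugate via the braid relation, so `σ_i σ_j⁻¹ ∈ K_n` for all `i, j`. For commuting
`s, t` such that `s u⁻¹` and `t u⁻¹` commute, one has `⁅s, u⁆ = ⁅t, u⁆`; hence, modulo `N`,
`⁅σ_i, σ_j⁆` does not change when `σ_i` is replaced by a generator at distance at least two.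
For `n ≥ 5` there are at least four generators, and "distance at least two" connects all of them,
so `⁅σ_i, σ_j⁆ ≡ ⁅σ_j, σ_j⁆ = 1`. Thus `B_n ⧸ N` is abelian, that is, `K_n ≤ N`.
-/

open scoped commutatorElement

theorem commutatorElement_eq_of_commute_mul_inv {G : Type*} [Group G] {s t u : G}
    (hst : Commute s t) (hsut : Commute (s * u⁻¹) (t * u⁻¹)) : ⁅s, u⁆ = ⁅t, u⁆ := by
  have hcomm : Commute (t⁻¹ * s) u := by
    have h := hsut.eq
    rw [← Commute.inv_right_iff]
    calc t⁻¹ * s * u⁻¹ = t⁻¹ * (s * u⁻¹ * (t * u⁻¹)) * u * t⁻¹ := by group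
      _ = t⁻¹ * (t * u⁻¹ * (s * u⁻¹)) * u * t⁻¹ := by rw [h]
      _ = u⁻¹ * (s * t⁻¹) := by group
      _ = u⁻¹ * (t⁻¹ * s) := by rw [hst.inv_right.eq]
  rw [commutatorElement_def, commutatorElement_def, mul_left_inj]
  calc s * u * s⁻¹ = t * (t⁻¹ * s * u) * s⁻¹ := by group
    _ = t * (u * (t⁻¹ * s)) * s⁻¹ := by rw [hcomm.eq]
    _ = t * u * t⁻¹ := by group

theorem isConj_of_mul_mul_eq {G : Type*} [Group G] {a b : G} (h : a * b * a = b * a * b) :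
    IsConj a b :=
  isConj_iff.mpr ⟨a * b, by rw [h]; group⟩

theorem IsConj.mul_inv_mem_commutator {G : Type*} [Group G] {g h : G} (hgh : IsConj g h) :
    g * h⁻¹ ∈ commutator G := by
  obtain ⟨c, rfl⟩ := isConj_iff.mp hgh
  rw [show g * (c * g * c⁻¹)⁻¹ = ⁅g, c⁆ by group]
  exact Subgroup.commutator_mem_commutator (Subgroup.mem_top g) (Subgroup.mem_top c)

theorem commutator_le_ker_of_commute {G Q ι : Type*} [Group G] [Group Q] {s : ι → G}
    (hs : Subgroup.closure (Set.range s) = ⊤) (f : G →* Q)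
    (hf : ∀ i j, Commute (f (s i)) (f (s j))) : commutator G ≤ f.ker := by
  rw [← Subgroup.map_eq_bot_iff, commutator_def, Subgroup.map_commutator, ← hs,
    MonoidHom.map_closure, ← Set.range_comp, Subgroup.commutator_eq_bot_iff_le_centralizer,
    Subgroup.centralizer_closure, Subgroup.closure_le]
  rintro _ ⟨i, rfl⟩ _ ⟨j, rfl⟩
  exact (hf j i).eq

theorem Fin.apply_eq_apply_of_add_two_le {α : Type*} {m : ℕ} (hm : 4 ≤ m) {f : Fin m → α}
    (hf : ∀ i j : Fin m, i.val + 2 ≤ j.val → f i = f j) (i j : Fin m) : f i = f j := by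
  suffices h0 : ∀ i : Fin m, f i = f ⟨0, by omega⟩ from (h0 i).trans (h0 j).symm
  intro i
  obtain h | h | h := (by omega : i.val = 0 ∨ i.val = 1 ∨ 2 ≤ i.val)
  · exact congrArg f (Fin.ext h)
  · rw [hf i ⟨3, by omega⟩ (by simp [h]), ← hf ⟨0, by omega⟩ ⟨3, by omega⟩ (by simp)]
  · exact (hf _ i h).symm

namespace BraidGroup

variable {n : ℕ}

theorem mk_eq_one_of_mem_braidRels {r : FreeGroup (Fin (n - 1))} (h : r ∈ braidRels n) :
    PresentedGroup.mk (braidRels n) r = 1 :=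
  (QuotientGroup.eq_one_iff r).mpr (Subgroup.subset_normalClosure h)

theorem braidGen_commute {i j : Fin (n - 1)} (h : 2 ≤ |(i : ℤ) - (j : ℤ)|) :
    Commute (braidGen i) (braidGen j) := by
  have h1 := mk_eq_one_of_mem_braidRels (Or.inl ⟨i, j, h, rfl⟩)
  simp only [map_mul, map_inv] at h1
  exact commutatorElement_eq_one_iff_commute.mp h1

theorem braidGen_braid {i j : Fin (n - 1)} (h : |(i : ℤ) - (j : ℤ)| = 1) :
    braidGen i * braidGen j * braidGen i = braidGen j * braidGen i * braidGen j := by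
  have h1 := mk_eq_one_of_mem_braidRels (Or.inr ⟨i, j, h, rfl⟩)
  simp only [map_mul, map_inv] at h1
  rwa [mul_inv_eq_one, mul_inv_eq_iff_eq_mul, mul_inv_eq_iff_eq_mul] at h1

theorem isConj_braidGen (i j : Fin (n - 1)) : IsConj (braidGen i) (braidGen j) := by
  have h0 : ∀ k (hk : k < n - 1), IsConj (braidGen ⟨0, by omega⟩) (braidGen ⟨k, hk⟩) := by
    intro k hk
    induction k with
    | zero => exact IsConj.refl _
    | succ k ih =>
      refine (ih (by omega)).trans (isConj_of_mul_mul_eq (braidGen_braid ?_))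
      simp
  exact (h0 i i.isLt).symm.trans (h0 j j.isLt)

theorem commutator_le_ker {Q : Type*} [Group Q] (hn : 5 ≤ n) (f : BraidGroup n →* Q)
    (hf : ∀ x ∈ commutator (BraidGroup n), ∀ y ∈ commutator (BraidGroup n), Commute (f x) (f y)) :
    commutator (BraidGroup n) ≤ f.ker := by
  refine commutator_le_ker_of_commute (PresentedGroup.closure_range_of _) f fun i j => ?_
  change Commute (f (braidGen i)) (f (braidGen j))
  have hfar : ∀ i i' : Fin (n - 1), i.val + 2 ≤ i'.val →
      ⁅f (braidGen i), f (braidGen j)⁆ = ⁅f (braidGen i'), f (braidGen j)⁆ := by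
    intro i i' h
    refine commutatorElement_eq_of_commute_mul_inv ((braidGen_commute ?_).map f) ?_
    · rw [abs_sub_comm, abs_of_nonneg] <;> omega
    · simpa using hf _ (isConj_braidGen i j).mul_inv_mem_commutator
        _ (isConj_braidGen i' j).mul_inv_mem_commutator
  rw [← commutatorElement_eq_one_iff_commute, Fin.apply_eq_apply_of_add_two_le (by omega) hfar i j,
    commutatorElement_self]

end BraidGroup

/-- For `n ≥ 5`, the commutator subgroup of the braid group is a perfect group. -/
theorem Kn_perfect (n : ℕ) (hn : 5 ≤ n) :
    commutator ↥(commutator (BraidGroup n)) = ⊤ := by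
  set K := commutator (BraidGroup n)
  rw [← Group.isPerfect_def, Subgroup.isPerfect_iff]
  refine le_antisymm (Subgroup.commutator_le_self K) ?_
  have hker := BraidGroup.commutator_le_ker hn (QuotientGroup.mk' ⁅K, K⁆) fun x hx y hy => by
    rw [← commutatorElement_eq_one_iff_commute, ← map_commutatorElement, QuotientGroup.mk'_apply,
      QuotientGroup.eq_one_iff]
    exact Subgroup.commutator_mem_commutator hx hy
  rwa [QuotientGroup.ker_mk'] at hker
end

section
/- For every n ≥ 6 and every solvable group Σ, the evaluation map (B_n →* Σ) → Σ sending a homomorphism F to F(σ_1) is a bijection; moreover every homomorphism F : B_n →* Σ satisfies F(σ_1) = F(σ_2) = ⋯ = F(σ_{n-1}) and has cyclic image. In particular |Hom(B_n, Σ)| = |Σ|. -/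
/-!
If the pairwise ratios `gᵢ⁻¹ * gⱼ` of a family satisfying the braid relations commute with each
other, then each of them commutes with every `gₖ`: for non-adjacent `i, j` the ratio commutes
with `gᵢ`, and for adjacent `i, j` one factors it through some `k` far from both, which exists
once there are at least five generators. Writing `gⱼ = gᵢ * d` with `d` commuting with `gᵢ`, the
braid relation becomes `d = d ^ 2`, so `d = 1`. Descending the derived series of a solvable
group, whose successive quotients are abelian, shows that all `gᵢ` coincide. Hence a
homomorphism from `B n` to a solvable group is determined by the common image of the generators,
and every element of the target occurs as that image.
-/

section BraidFamily

variable {G H : Type*} [Group G] [Group H]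

theorem eq_of_braid_of_commute_inv_mul {a b : G} (hbr : a * b * a = b * a * b)
    (hc : Commute a (a⁻¹ * b)) : a = b := by
  obtain ⟨d, rfl⟩ : ∃ d, b = a * d := ⟨a⁻¹ * b, by group⟩
  rw [inv_mul_cancel_left] at hc
  simp only [mul_assoc, hc.eq.symm, hc.symm.left_comm] at hbr
  simpa using hbr

theorem commute_mk_of_mem_derivedSeries {k : ℕ} {x y : G} (hx : x ∈ derivedSeries G k)
    (hy : y ∈ derivedSeries G k) :
    Commute (x : G ⧸ derivedSeries G (k + 1)) (y : G ⧸ derivedSeries G (k + 1)) := by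
  rw [← commutatorElement_eq_one_iff_commute, ← QuotientGroup.mk'_apply,
    ← QuotientGroup.mk'_apply, ← map_commutatorElement, QuotientGroup.mk'_apply,
    QuotientGroup.eq_one_iff, derivedSeries_succ]
  exact Subgroup.commutator_mem_commutator hx hy

theorem Fin.exists_far_of_adjacent {N : ℕ} (hN : 5 ≤ N) {i j : Fin N}
    (h : |(i : ℤ) - (j : ℤ)| = 1) :
    ∃ k : Fin N, 2 ≤ |(i : ℤ) - (k : ℤ)| ∧ 2 ≤ |(k : ℤ) - (j : ℤ)| := by
  refine ⟨⟨if 5 ≤ (i : ℕ) + j then 0 else 4, by split_ifs <;> omega⟩, ?_⟩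
  rw [abs_eq zero_le_one] at h
  simp only [le_abs]
  split_ifs <;> push_cast <;> omega

structure IsBraidFamily {N : ℕ} (g : Fin N → G) : Prop where
  commute : ∀ i j : Fin N, 2 ≤ |(i : ℤ) - (j : ℤ)| → Commute (g i) (g j)
  braid : ∀ i j : Fin N, |(i : ℤ) - (j : ℤ)| = 1 → g i * g j * g i = g j * g i * g j

namespace IsBraidFamily

variable {N : ℕ} {g : Fin N → G}

theorem map (hg : IsBraidFamily g) (f : G →* H) : IsBraidFamily (f ∘ g) where
  commute i j h := (hg.commute i j h).map f
  braid i j h := by simp only [Function.comp_apply, ← map_mul, hg.braid i j h]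

theorem commute_inv_mul (hg : IsBraidFamily g) {i j : Fin N} (h : 2 ≤ |(i : ℤ) - (j : ℤ)|) :
    Commute (g i) ((g i)⁻¹ * g j) :=
  (Commute.refl _).inv_right.mul_right (hg.commute i j h)

theorem eq_of_adjacent (hg : IsBraidFamily g) (hN : 5 ≤ N)
    (hcomm : ∀ i j k l, Commute ((g i)⁻¹ * g j) ((g k)⁻¹ * g l)) {i j : Fin N}
    (h : |(i : ℤ) - (j : ℤ)| = 1) : g i = g j := by
  have transfer : ∀ {x} i k, Commute x (g i) → Commute x ((g i)⁻¹ * g k) → Commute x (g k) :=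
    fun i k hi hik => by simpa using hi.mul_right hik
  obtain ⟨k, hik, hkj⟩ := Fin.exists_far_of_adjacent hN h
  have hk : Commute ((g i)⁻¹ * g j) (g k) := by
    rw [show (g i)⁻¹ * g j = (g i)⁻¹ * g k * ((g k)⁻¹ * g j) by group]
    refine Commute.mul_left ?_ (hg.commute_inv_mul hkj).symm
    exact transfer i k (hg.commute_inv_mul hik).symm (Commute.refl _)
  exact eq_of_braid_of_commute_inv_mul (hg.braid i j h) (transfer k i hk (hcomm _ _ _ _)).symm

theorem eq_of_commute_inv_mul (hg : IsBraidFamily g) (hN : 5 ≤ N)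
    (hcomm : ∀ i j k l, Commute ((g i)⁻¹ * g j) ((g k)⁻¹ * g l)) (i j : Fin N) : g i = g j := by
  suffices h : ∀ m (hm : m < N), g ⟨m, hm⟩ = g ⟨0, by omega⟩ from (h i i.2).trans (h j j.2).symm
  intro m hm
  induction m with
  | zero => rfl
  | succ m ih =>
    rw [← ih (by omega)]
    exact (hg.eq_of_adjacent hN hcomm (by simp)).symm

theorem eq_of_isSolvable [Group.IsSolvable G] (hg : IsBraidFamily g) (hN : 5 ≤ N)
    (i j : Fin N) : g i = g j := by
  obtain ⟨m, hm⟩ := Group.IsSolvable.solvable (G := G)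
  suffices h : ∀ k i j, (g i)⁻¹ * g j ∈ derivedSeries G k by
    simpa [hm, inv_mul_eq_one] using h m i j
  intro k
  induction k with
  | zero => simp
  | succ k ih =>
    intro i j
    rw [← QuotientGroup.eq]
    refine (hg.map (QuotientGroup.mk' _)).eq_of_commute_inv_mul hN (fun i j k l => ?_) i j
    simpa only [Function.comp_apply, QuotientGroup.mk'_apply, ← QuotientGroup.mk_inv,
      ← QuotientGroup.mk_mul] using commute_mk_of_mem_derivedSeries (ih i j) (ih k l)

end IsBraidFamily

end BraidFamily

theorem PresentedGroup.range_le_zpowers {α G : Type*} [Group G] {rels : Set (FreeGroup α)}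
    {f : PresentedGroup rels →* G} {s : G} (h : ∀ x, f (.of x) = s) :
    f.range ≤ Subgroup.zpowers s := by
  rw [MonoidHom.range_eq_map, ← PresentedGroup.closure_range_of, MonoidHom.map_closure,
    Subgroup.closure_le]
  rintro _ ⟨_, ⟨x, rfl⟩, rfl⟩
  exact h x ▸ Subgroup.mem_zpowers s

namespace BraidGroup

theorem isBraidFamily_braidGen (n : ℕ) : IsBraidFamily (braidGen (n := n)) where
  commute i j h :=
    commutatorElement_eq_one_iff_commute.mp (PresentedGroup.one_of_mem (Or.inl ⟨i, j, h, rfl⟩))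
  braid i j h := by
    refine mul_inv_eq_one.mp ?_
    simp only [mul_inv_rev, ← mul_assoc]
    exact PresentedGroup.one_of_mem (Or.inr ⟨i, j, h, rfl⟩)

variable {G : Type*} [Group G]

def constLift (n : ℕ) (s : G) : BraidGroup n →* G :=
  PresentedGroup.toGroup (f := fun _ => s) <| by
    rintro r (⟨i, j, -, rfl⟩ | ⟨i, j, -, rfl⟩) <;> simp

theorem constLift_braidGen (n : ℕ) (s : G) (i : Fin (n - 1)) : constLift n s (braidGen i) = s :=
  PresentedGroup.toGroup.of _

end BraidGroup

/-- For `n ≥ 6` and a solvable group `S`, evaluation at the first generator is a bijection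
from homomorphisms `BraidGroup n →* S` to `S`; every homomorphism takes the same value on
all generators and has cyclic image; and the number of homomorphisms equals `Nat.card S`. -/
theorem hom_Bn_solvable (n : ℕ) (hn : 6 ≤ n) (S : Type) [Group S] [Group.IsSolvable S] :
    Function.Bijective (fun F : BraidGroup n →* S => F (braidGen ⟨0, by omega⟩)) ∧
    (∀ F : BraidGroup n →* S,
      (∀ i j : Fin (n - 1), F (braidGen i) = F (braidGen j)) ∧ IsCyclic ↥F.range) ∧
    Nat.card (BraidGroup n →* S) = Nat.card S := by
  have hconst (F : BraidGroup n →* S) : ∀ i j, F (braidGen i) = F (braidGen j) :=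
    ((BraidGroup.isBraidFamily_braidGen n).map F).eq_of_isSolvable (by omega)
  set i₀ : Fin (n - 1) := ⟨0, by omega⟩
  have hbij : Function.Bijective (fun F : BraidGroup n →* S => F (braidGen i₀)) :=
    ⟨fun F F' h => PresentedGroup.ext fun i => (hconst F i i₀).trans (h.trans (hconst F' i₀ i)),
      fun s => ⟨BraidGroup.constLift n s, BraidGroup.constLift_braidGen n s i₀⟩⟩
  refine ⟨hbij, fun F => ⟨hconst F, ?_⟩, Nat.card_eq_of_bijective _ hbij⟩
  exact Subgroup.isCyclic_of_le (PresentedGroup.range_le_zpowers fun i => hconst F i i₀)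
end

section
/- For every n ≥ 6 and every r, every group homomorphism f : K_n →* S_r takes values in the alternating group: for every x ∈ K_n, the sign of the permutation f(x) is 1. In other words, Hom(K_n, S_r) = Hom(K_n, A_r). -/
section GroupLemmas

variable {G : Type*} [Group G]

lemma inv_mul_inv_mul_eq_of_braid {a b : G} (hab : a * b * a = b * a * b) :
    a⁻¹ * b⁻¹ * a = b * a⁻¹ * b⁻¹ :=
  calc a⁻¹ * b⁻¹ * a = a⁻¹ * b⁻¹ * (a * b * a) * (b * a)⁻¹ := by group
    _ = a⁻¹ * b⁻¹ * (b * a * b) * (b * a)⁻¹ := by rw [hab]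
    _ = b * a⁻¹ * b⁻¹ := by group

lemma eq_of_braid_of_commute_mul_inv {a b c : G} (hac : Commute a c)
    (hab : a * b * a = b * a * b) (hbc : b * c * b = c * b * c)
    (hx : Commute (a * c⁻¹) (c * b⁻¹)) : a = c := by
  have hswap : a * b⁻¹ * c = c * b⁻¹ * a :=
    calc a * b⁻¹ * c = a * c⁻¹ * (c * b⁻¹) * c := by group
      _ = c * b⁻¹ * (a * c⁻¹) * c := by rw [hx.eq]
      _ = c * b⁻¹ * a := by group
  have hconj : c⁻¹ * b⁻¹ * c = a⁻¹ * b⁻¹ * a :=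
    calc c⁻¹ * b⁻¹ * c = c⁻¹ * a⁻¹ * (a * b⁻¹ * c) := by group
      _ = c⁻¹ * (a⁻¹ * c) * b⁻¹ * a := by rw [hswap]; group
      _ = a⁻¹ * b⁻¹ * a := by rw [hac.inv_left.eq]; group
  rw [inv_mul_inv_mul_eq_of_braid hab, inv_mul_inv_mul_eq_of_braid hbc.symm] at hconj
  simpa using hconj.symm

theorem pairwise_commute_of_braid {m : ℕ} (hm : 5 ≤ m) (g : Fin m → G)
    (hcomm : ∀ i j : Fin m, (i : ℕ) + 2 ≤ j → Commute (g i) (g j))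
    (hbraid : ∀ i j : Fin m, (i : ℕ) + 1 = j → g i * g j * g i = g j * g i * g j)
    (N : Subgroup G) (hN : ∀ x ∈ N, ∀ y ∈ N, Commute x y)
    (hmem : ∀ i j : Fin m, (i : ℕ) + 1 = j → g i * (g j)⁻¹ ∈ N) (i j : Fin m) :
    Commute (g i) (g j) := by
  have hstep : ∀ i k : Fin m, (i : ℕ) + 2 = k → g i = g k := by
    intro i k hik
    let j : Fin m := ⟨i + 1, by omega⟩
    have hij : (i : ℕ) + 1 = j := rfl
    have hjk : (j : ℕ) + 1 = k := by omega
    have hsplit : g i * (g k)⁻¹ = g i * (g j)⁻¹ * (g j * (g k)⁻¹) := by group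
    have hinv : g k * (g j)⁻¹ = (g j * (g k)⁻¹)⁻¹ := by group
    refine eq_of_braid_of_commute_mul_inv (hcomm i k hik.le) (hbraid i j hij) (hbraid j k hjk)
      (hN _ ?_ _ ?_)
    · rw [hsplit]
      exact N.mul_mem (hmem i j hij) (hmem j k hjk)
    · rw [hinv]
      exact N.inv_mem (hmem j k hjk)
  have hadj : ∀ i j : Fin m, (i : ℕ) + 1 = j → Commute (g i) (g j) := by
    intro i j hij
    by_cases hfar : (j : ℕ) + 2 < m
    · rw [hstep j ⟨j + 2, hfar⟩ rfl]
      exact hcomm i _ (by dsimp only; omega)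
    · rw [← hstep ⟨i - 2, by omega⟩ i (by dsimp only; omega)]
      exact hcomm _ j (by dsimp only; omega)
  have hle : ∀ i j : Fin m, (i : ℕ) ≤ j → Commute (g i) (g j) := by
    intro i j hij
    rcases Nat.lt_or_ge ((i : ℕ) + 1) j with hlt | hge
    · exact hcomm i j hlt
    · rcases eq_or_lt_of_le hij with heq | hlt
      · rw [Fin.ext heq]
      · exact hadj i j (by omega)
  rcases le_total (i : ℕ) j with h | h
  exacts [hle i j h, (hle j i h).symm]

lemma isMulCommutative_of_closure_eq_top {s : Set G}
    (hs : Subgroup.closure s = ⊤) (hcomm : ∀ x ∈ s, ∀ y ∈ s, Commute x y) :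
    IsMulCommutative G := by
  have h : Subgroup.closure s ≤ Subgroup.centralizer (Subgroup.closure s) := by
    rw [Subgroup.centralizer_closure, Subgroup.closure_le]
    exact fun x hx y hy => (hcomm y hy x hx).eq
  rw [hs] at h
  exact isMulCommutative_iff.mpr fun x y => h (Subgroup.mem_top y) x (Subgroup.mem_top x)

lemma commute_mk_of_mem {N : Subgroup G} [N.Normal] {x y : G}
    (hx : x ∈ N) (hy : y ∈ N) : Commute (x : G ⧸ ⁅N, N⁆) y := by
  rw [← commutatorElement_eq_one_iff_commute, ← QuotientGroup.mk'_apply, ← QuotientGroup.mk'_apply,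
    ← map_commutatorElement, QuotientGroup.mk'_apply, QuotientGroup.eq_one_iff]
  exact Subgroup.commutator_mem_commutator hx hy

end GroupLemmas

lemma eq_of_braid_of_comm {A : Type*} [CommGroup A] {a b : A} (hab : a * b * a = b * a * b) :
    a = b := by
  have h : a * (a * b) = b * (a * b) := by
    rw [← mul_assoc, ← mul_assoc, mul_right_comm, hab]
  exact mul_right_cancel h

section BraidGroup

variable {n : ℕ}

lemma braidGen_commute {i j : Fin (n - 1)} (h : (i : ℕ) + 2 ≤ j) :
    Commute (braidGen i) (braidGen j) := by
  have hrel := PresentedGroup.one_of_mem (rels := braidRels n) (Or.inl ⟨i, j, by grind, rfl⟩)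
  simp only [map_mul, map_inv] at hrel
  exact commutatorElement_eq_one_iff_commute.mp hrel

lemma braidGen_braid {i j : Fin (n - 1)} (h : (i : ℕ) + 1 = j) :
    braidGen i * braidGen j * braidGen i = braidGen j * braidGen i * braidGen j := by
  have hrel := PresentedGroup.one_of_mem (rels := braidRels n) (Or.inr ⟨i, j, by grind, rfl⟩)
  change braidGen i * braidGen j * braidGen i * (braidGen j)⁻¹ * (braidGen i)⁻¹ * (braidGen j)⁻¹
    = 1 at hrel
  rwa [show ∀ a b : BraidGroup n, a * b * a * b⁻¹ * a⁻¹ * b⁻¹ = a * b * a * (b * a * b)⁻¹ by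
    intros; group, mul_inv_eq_one] at hrel

lemma closure_range_braidGen : Subgroup.closure (Set.range (braidGen (n := n))) = ⊤ :=
  PresentedGroup.closure_range_of _

lemma braidGen_mul_inv_mem_commutator {i j : Fin (n - 1)} (h : (i : ℕ) + 1 = j) :
    braidGen i * (braidGen j)⁻¹ ∈ commutator (BraidGroup n) := by
  have hab : Abelianization.of (braidGen i) = Abelianization.of (braidGen j) := by
    apply eq_of_braid_of_comm
    simp only [← map_mul, braidGen_braid h]
  rw [← Abelianization.ker_of, MonoidHom.mem_ker, map_mul, map_inv, hab, mul_inv_cancel]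

theorem isPerfect_commutator_braidGroup (hn : 6 ≤ n) :
    Group.IsPerfect (commutator (BraidGroup n)) := by
  set K := commutator (BraidGroup n)
  rw [Subgroup.isPerfect_iff]
  refine le_antisymm K.commutator_le_self ?_
  rw [← Subgroup.Normal.quotient_commutative_iff_commutator_le]
  let π := QuotientGroup.mk' ⁅K, K⁆
  let g : Fin (n - 1) → BraidGroup n ⧸ ⁅K, K⁆ := fun i => π (braidGen i)
  have hgen : Subgroup.closure (Set.range g) = ⊤ := by
    rw [show Set.range g = π '' Set.range braidGen from Set.range_comp π braidGen,
      ← MonoidHom.map_closure, closure_range_braidGen]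
    exact Subgroup.map_top_of_surjective π (QuotientGroup.mk'_surjective _)
  refine isMulCommutative_of_closure_eq_top hgen ?_
  rintro _ ⟨i, rfl⟩ _ ⟨j, rfl⟩
  refine pairwise_commute_of_braid (by omega) g (fun i j h => (braidGen_commute h).map π)
    (fun i j h => by simp only [g, ← map_mul, braidGen_braid h]) (K.map π) ?_ ?_ i j
  · rintro _ ⟨x, hx, rfl⟩ _ ⟨y, hy, rfl⟩
    exact commute_mk_of_mem hx hy
  · intro i j h
    rw [← map_inv, ← map_mul]
    exact Subgroup.mem_map_of_mem π (braidGen_mul_inv_mem_commutator h)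

end BraidGroup

/-- For `n ≥ 6`, every homomorphism from the commutator subgroup of the braid group into a
symmetric group takes values in the alternating group. -/
theorem hom_Kn_symm_values_in_alternating (n r : ℕ) (hn : 6 ≤ n)
    (f : ↥(commutator (BraidGroup n)) →* Equiv.Perm (Fin r)) :
    ∀ x, Equiv.Perm.sign (f x) = 1 := by
  have := isPerfect_commutator_braidGroup hn
  intro x
  exact Abelianization.commutator_subset_ker (Equiv.Perm.sign.comp f)
    Group.IsPerfect.mem_commutator
end

section
/- The group K_3 has exactly thirteen subgroups of index 3: Nat.card {H : Subgroup K_3 // H.index = 3} = 13. -/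
/-
Sending `σ₁ ↦ t` and `σ₂ ↦ a t` identifies `B₃` with `F₂ ⋊ ℤ`, where `F₂ = ⟨a, b⟩` and the
generator `t` of `ℤ` acts by `a ↦ b`, `b ↦ a⁻¹ b` (in `B₃`: `a = σ₂σ₁⁻¹`, `b = σ₁ a σ₁⁻¹`). As `ℤ`
is abelian and the commutators `⁅t, a⁆ = b a⁻¹`, `⁅t, b⁆ = a⁻¹` generate `F₂`, the commutator
subgroup `K₃` is `F₂`.

A subgroup `H` of index `n + 1` in a group `G` is the stabilizer of `0` for exactly `n!` transitive
actions of `G` on `{0, …, n}`, one for each bijection `G ⧸ H ≃ {0, …, n}` sending `H` to `0`. For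
`G = F₂` such actions are pairs of permutations generating a transitive subgroup of `S₃`; there
are `26` of them, so `F₂` has `26 / 2! = 13` subgroups of index `3`.
-/

open Equiv SemidirectProduct Multiplicative

lemma Nat.card_subtype_equiv_apply_eq {α β : Type*} {k : ℕ} (hα : Nat.card α = k + 1)
    (hβ : Nat.card β = k + 1) (a : α) (b : β) : Nat.card {e : α ≃ β // e a = b} = k.factorial := by
  classical
  have : Finite α := Nat.finite_of_card_ne_zero (by omega)
  have : Finite β := Nat.finite_of_card_ne_zero (by omega)
  have e₁ : {e : α ≃ β // e a = b} ≃ ({x // x ≠ a} ≃ {y // y ≠ b}) :=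
    ((optionSubtypeNe a).equivCongr (Equiv.refl β)).symm.subtypeEquiv
      (fun e => by simp [optionSubtypeNe]) |>.trans (optionSubtype b)
  have ha := Finite.card_option.symm.trans (Nat.card_congr (optionSubtypeNe a))
  have hb := Finite.card_option.symm.trans (Nat.card_congr (optionSubtypeNe b))
  obtain ⟨e₀⟩ := Finite.card_eq.mp (show Nat.card {x // x ≠ a} = Nat.card {y // y ≠ b} by omega)
  rw [Nat.card_congr (e₁.trans ((Equiv.refl _).equivCongr e₀.symm)), Nat.card_perm]
  congr
  omega

lemma Nat.card_sigma_of_card_eq {ι : Type*} {F : ι → Type*} {k : ℕ} (hk : k ≠ 0)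
    (hF : ∀ i, Nat.card (F i) = k) : Nat.card (Σ i, F i) = Nat.card ι * k := by
  have (i : ι) : Finite (F i) := Nat.finite_of_card_ne_zero (hF i ▸ hk)
  rw [Nat.card_congr ((Equiv.sigmaCongrRight fun i => Finite.equivFinOfCardEq (hF i)).trans
    (Equiv.sigmaEquivProd ι (Fin k))), Nat.card_prod, Nat.card_fin]

section TransitiveHom

variable {G : Type*} [Group G] {n : ℕ}

def IsTransitiveHom (f : G →* Perm (Fin (n + 1))) : Prop := ∀ x, ∃ g, f g 0 = x

def pointStabilizer (f : G →* Perm (Fin (n + 1))) : Subgroup G :=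
  (MulAction.stabilizer (Perm (Fin (n + 1))) (0 : Fin (n + 1))).comap f

lemma mem_pointStabilizer {f : G →* Perm (Fin (n + 1))} {g : G} :
    g ∈ pointStabilizer f ↔ f g 0 = 0 := by
  simp [pointStabilizer, MulAction.mem_stabilizer_iff, Perm.smul_def]

lemma apply_zero_eq_apply_zero_iff (f : G →* Perm (Fin (n + 1))) (g h : G) :
    f g 0 = f h 0 ↔ g⁻¹ * h ∈ pointStabilizer f := by
  rw [mem_pointStabilizer, map_mul, map_inv, Perm.mul_apply, Perm.inv_eq_iff_eq, eq_comm]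

noncomputable def orbitEquivOfTransitive {f : G →* Perm (Fin (n + 1))} (hf : IsTransitiveHom f)
    {H : Subgroup G} (hH : pointStabilizer f = H) : G ⧸ H ≃ Fin (n + 1) :=
  Equiv.ofBijective
    (Quotient.lift (fun g => f g 0) fun g h hgh => by
      rwa [apply_zero_eq_apply_zero_iff, hH, ← QuotientGroup.leftRel_apply])
    ⟨fun p q => Quotient.inductionOn₂' p q fun g h hgh => Quotient.sound' <|
      QuotientGroup.leftRel_apply.mpr (hH ▸ (apply_zero_eq_apply_zero_iff f g h).mp hgh),
     fun x => (hf x).elim fun g hg => ⟨g, hg⟩⟩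

@[simp]
lemma orbitEquivOfTransitive_mk {f : G →* Perm (Fin (n + 1))} (hf : IsTransitiveHom f)
    {H : Subgroup G} (hH : pointStabilizer f = H) (g : G) :
    orbitEquivOfTransitive hf hH g = f g 0 := rfl

lemma index_pointStabilizer {f : G →* Perm (Fin (n + 1))} (hf : IsTransitiveHom f) :
    (pointStabilizer f).index = n + 1 := by
  rw [Subgroup.index, Nat.card_congr (orbitEquivOfTransitive hf rfl), Nat.card_eq_fintype_card,
    Fintype.card_fin]

def homOfQuotientEquiv {H : Subgroup G} (e : G ⧸ H ≃ Fin (n + 1)) : G →* Perm (Fin (n + 1)) :=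
  e.permCongrHom.toMonoidHom.comp (MulAction.toPermHom G (G ⧸ H))

lemma homOfQuotientEquiv_apply {H : Subgroup G} (e : G ⧸ H ≃ Fin (n + 1)) (g : G)
    (x : Fin (n + 1)) : homOfQuotientEquiv e g x = e (g • e.symm x) := rfl

lemma isTransitiveHom_homOfQuotientEquiv {H : Subgroup G} {e : G ⧸ H ≃ Fin (n + 1)}
    (he : e (1 : G) = 0) : IsTransitiveHom (homOfQuotientEquiv e) := fun x => by
  obtain ⟨g, hg⟩ := QuotientGroup.mk_surjective (e.symm x)
  refine ⟨g, ?_⟩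
  rw [homOfQuotientEquiv_apply, ← he, e.symm_apply_apply, MulAction.Quotient.smul_mk, smul_eq_mul,
    mul_one, hg, e.apply_symm_apply]

lemma pointStabilizer_homOfQuotientEquiv {H : Subgroup G} {e : G ⧸ H ≃ Fin (n + 1)}
    (he : e (1 : G) = 0) : pointStabilizer (homOfQuotientEquiv e) = H := by
  ext g
  rw [mem_pointStabilizer, homOfQuotientEquiv_apply, ← he, e.symm_apply_apply,
    e.apply_eq_iff_eq, MulAction.Quotient.smul_mk, smul_eq_mul, mul_one, QuotientGroup.eq, mul_one,
    inv_mem_iff]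

noncomputable def transitiveHomEquiv (H : Subgroup G) :
    {f : G →* Perm (Fin (n + 1)) // IsTransitiveHom f ∧ pointStabilizer f = H} ≃
      {e : G ⧸ H ≃ Fin (n + 1) // e (1 : G) = 0} where
  toFun f := ⟨orbitEquivOfTransitive f.2.1 f.2.2, by simp⟩
  invFun e := ⟨homOfQuotientEquiv e.1, isTransitiveHom_homOfQuotientEquiv e.2,
    pointStabilizer_homOfQuotientEquiv e.2⟩
  left_inv := fun ⟨f, hf, hH⟩ => by
    ext g x
    obtain ⟨h, rfl⟩ := hf x
    have hsymm : (orbitEquivOfTransitive hf hH).symm (f h 0) = h :=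
      (Equiv.symm_apply_eq _).mpr rfl
    rw [homOfQuotientEquiv_apply, hsymm, MulAction.Quotient.smul_mk, orbitEquivOfTransitive_mk,
      smul_eq_mul, map_mul, Perm.mul_apply]
  right_inv := fun ⟨e, he⟩ => by
    ext q
    obtain ⟨g, rfl⟩ := QuotientGroup.mk_surjective q
    simp [homOfQuotientEquiv_apply, ← he]

theorem card_isTransitiveHom (G : Type*) [Group G] (n : ℕ) :
    Nat.card {f : G →* Perm (Fin (n + 1)) // IsTransitiveHom f} =
      Nat.card {H : Subgroup G // H.index = n + 1} * n.factorial := by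
  let stab (f : {f : G →* Perm (Fin (n + 1)) // IsTransitiveHom f}) :
      {H : Subgroup G // H.index = n + 1} := ⟨pointStabilizer f.1, index_pointStabilizer f.2⟩
  rw [Nat.card_congr (Equiv.sigmaFiberEquiv stab).symm]
  refine Nat.card_sigma_of_card_eq n.factorial_ne_zero fun H => ?_
  have fiber : {f // stab f = H} ≃
      {f : G →* Perm (Fin (n + 1)) // IsTransitiveHom f ∧ pointStabilizer f = H} :=
    (Equiv.subtypeEquivRight fun f => Subtype.ext_iff).trans
      (Equiv.subtypeSubtypeEquivSubtypeInter _ (pointStabilizer · = H.1))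
  rw [Nat.card_congr (fiber.trans (transitiveHomEquiv H.1))]
  exact Nat.card_subtype_equiv_apply_eq H.2 (Nat.card_fin _) _ _

end TransitiveHom

lemma Equiv.Perm.inv_apply_mem_of_forall_apply_mem {X : Type*} {σ : Perm X} {S : Finset X}
    (h : ∀ x ∈ S, σ x ∈ S) {x : X} (hx : x ∈ S) : σ⁻¹ x ∈ S := by
  have hmap : S.map σ.toEmbedding = S := Finset.map_eq_of_subset fun y hy => by
    obtain ⟨x, hx, rfl⟩ := Finset.mem_map.mp hy
    exact h x hx
  rw [← hmap] at hx
  obtain ⟨y, hy, rfl⟩ := Finset.mem_map.mp hx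
  simpa using hy

lemma isTransitiveHom_iff_forall_finset {α : Type*} {n : ℕ}
    (f : FreeGroup α →* Perm (Fin (n + 1))) :
    IsTransitiveHom f ↔ ∀ S : Finset (Fin (n + 1)), 0 ∈ S →
      (∀ i, ∀ x ∈ S, f (FreeGroup.of i) x ∈ S) → S = Finset.univ := by
  classical
  constructor
  · intro hf S h0 hS
    have hS' : ∀ g, ∀ x ∈ S, f g x ∈ S := by
      intro g
      induction g using FreeGroup.induction_on with
      | C1 => simp
      | of i => exact hS i
      | inv_of i _ => simpa using fun x hx => Perm.inv_apply_mem_of_forall_apply_mem (hS i) hx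
      | mul g h hg hh => simpa using fun x hx => hg _ (hh x hx)
    exact Finset.eq_univ_of_forall fun x => (hf x).elim fun g hg => hg ▸ hS' g 0 h0
  · intro h x
    have horbit := h {y | ∃ g, f g 0 = y} (by simpa using ⟨1, by simp⟩) fun i y hy => by
      obtain ⟨g, rfl⟩ := (Finset.mem_filter.mp hy).2
      simpa using ⟨FreeGroup.of i * g, by simp⟩
    simpa using (Finset.ext_iff.mp horbit x).mpr (Finset.mem_univ x)

theorem card_isTransitiveHom_freeGroup_bool_fin_three :
    Nat.card {f : FreeGroup Bool →* Perm (Fin 3) // IsTransitiveHom f} = 26 := by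
  have hpairs : Nat.card {s : Bool → Perm (Fin 3) // ∀ S : Finset (Fin 3), 0 ∈ S →
      (∀ i, ∀ x ∈ S, s i x ∈ S) → S = Finset.univ} = 26 := by
    rw [Nat.card_eq_fintype_card]
    decide
  rw [← hpairs]
  exact Nat.card_congr (FreeGroup.lift.subtypeEquiv fun s => by
    simp [isTransitiveHom_iff_forall_finset]).symm

lemma inv_mul_mul_eq_of_braid {G : Type*} [Group G] {x y : G} (h : x * y * x = y * x * y) :
    y⁻¹ * x * y = x * y * x⁻¹ := by
  rw [eq_mul_inv_iff_mul_eq, mul_assoc, mul_assoc, inv_mul_eq_iff_eq_mul, ← mul_assoc, h,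
    mul_assoc]

lemma MonoidHom.apply_zpow_apply {M N : Type*} [Group M] [Group N] (f : M →* N)
    {α : MulAut M} {β : MulAut N} (h : ∀ x, f (α x) = β (f x)) (k : ℤ) (x : M) :
    f ((α ^ k) x) = (β ^ k) (f x) := by
  induction k using Int.induction_on generalizing x with
  | zero => rfl
  | succ k ih => rw [zpow_add_one, zpow_add_one, MulAut.mul_apply, MulAut.mul_apply, ih, h]
  | pred k ih =>
    rw [zpow_sub_one, zpow_sub_one, MulAut.mul_apply, MulAut.mul_apply, ih]
    conv_rhs => rw [← MulAut.apply_inv_self M α x, h, MulAut.inv_apply_self]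

lemma SemidirectProduct.commutator_le_range_inl {N G : Type*} [Group N] [CommGroup G]
    {φ : G →* MulAut N} : commutator (N ⋊[φ] G) ≤ (inl : N →* N ⋊[φ] G).range := by
  rw [range_inl_eq_ker_rightHom]
  exact Abelianization.commutator_subset_ker (rightHom : N ⋊[φ] G →* G)

open scoped commutatorElement in
lemma SemidirectProduct.inl_apply_mul_inv_mem_commutator {N G : Type*} [Group N] [Group G]
    {φ : G →* MulAut N} (g : G) (x : N) :
    (inl (φ g x * x⁻¹) : N ⋊[φ] G) ∈ commutator (N ⋊[φ] G) := by
  have : (inl (φ g x * x⁻¹) : N ⋊[φ] G) = ⁅(inr g : N ⋊[φ] G), inl x⁆ := by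
    rw [map_mul, inl_aut, commutatorElement_def, map_inv, map_inv]
  rw [this]
  exact Subgroup.commutator_mem_commutator (Subgroup.mem_top _) (Subgroup.mem_top _)

lemma MulEquiv.map_commutator {G G' : Type*} [Group G] [Group G'] (e : G ≃* G') :
    (commutator G).map (e : G →* G') = commutator G' := by
  rw [map_commutator_eq, MonoidHom.range_eq_top.mpr e.surjective]
  rfl

lemma MulEquiv.card_subgroup_index_eq {G G' : Type*} [Group G] [Group G'] (e : G ≃* G')
    (k : ℕ) :
    Nat.card {H : Subgroup G // H.index = k} = Nat.card {H : Subgroup G' // H.index = k} :=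
  Nat.card_congr <| e.mapSubgroup.toEquiv.subtypeEquiv fun H => by
    simp [MulEquiv.mapSubgroup, Subgroup.index_map_equiv]

lemma braidGen_mul_braidGen_mul_braidGen {n : ℕ} {i j : Fin (n - 1)} (h : |(i : ℤ) - j| = 1) :
    braidGen i * braidGen j * braidGen i = braidGen j * braidGen i * braidGen j := by
  have hrel := PresentedGroup.one_of_mem (rels := braidRels n) (Or.inr ⟨i, j, h, rfl⟩)
  simp only [map_mul, map_inv] at hrel
  rwa [mul_inv_eq_one, mul_inv_eq_iff_eq_mul, mul_inv_eq_iff_eq_mul] at hrel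

lemma lift_braidRels_eq_one {n : ℕ} {H : Type*} [Group H] {f : Fin (n - 1) → H}
    (hcomm : ∀ i j : Fin (n - 1), 2 ≤ |(i : ℤ) - j| → Commute (f i) (f j))
    (hbraid : ∀ i j : Fin (n - 1), |(i : ℤ) - j| = 1 → f i * f j * f i = f j * f i * f j) :
    ∀ r ∈ braidRels n, FreeGroup.lift f r = 1 := by
  rintro r (⟨i, j, hij, rfl⟩ | ⟨i, j, hij, rfl⟩) <;>
    simp only [map_mul, map_inv, FreeGroup.lift_apply_of]
  · rw [mul_inv_eq_one, mul_inv_eq_iff_eq_mul]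
    exact (hcomm i j hij).eq
  · rw [mul_inv_eq_one, mul_inv_eq_iff_eq_mul, mul_inv_eq_iff_eq_mul]
    exact hbraid i j hij

def braidAut : MulAut (FreeGroup Bool) :=
  MonoidHom.toMulEquiv
    (FreeGroup.lift fun i => if i then (.of false)⁻¹ * .of true else .of true)
    (FreeGroup.lift fun i => if i then .of false else .of false * (.of true)⁻¹)
    (by ext i; cases i <;> simp) (by ext i; cases i <;> simp)

@[simp] lemma braidAut_of_false : braidAut (.of false) = .of true := by simp [braidAut]
@[simp] lemma braidAut_of_true : braidAut (.of true) = (.of false)⁻¹ * .of true := by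
  simp [braidAut]

abbrev BraidSemidirect := FreeGroup Bool ⋊[zpowersHom _ braidAut] Multiplicative ℤ

abbrev σ₁ : BraidGroup 3 := braidGen 0
abbrev σ₂ : BraidGroup 3 := braidGen 1

lemma σ₁_mul_σ₂_mul_σ₁ : σ₁ * σ₂ * σ₁ = σ₂ * σ₁ * σ₂ :=
  braidGen_mul_braidGen_mul_braidGen (by decide)

lemma braidSemidirect_braid :
    (inr (ofAdd 1) : BraidSemidirect) * (inl (.of false) * inr (ofAdd 1)) * inr (ofAdd 1) =
      inl (.of false) * inr (ofAdd 1) * inr (ofAdd 1) * (inl (.of false) * inr (ofAdd 1)) := by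
  ext <;> simp [pow_two]

def toBraidSemidirect : BraidGroup 3 →* BraidSemidirect :=
  PresentedGroup.toGroup (f := ![inr (ofAdd 1), inl (.of false) * inr (ofAdd 1)])
    (lift_braidRels_eq_one (n := 3) (fun i j h => by fin_cases i <;> fin_cases j <;> simp at h)
      fun i j h => by
        fin_cases i <;> fin_cases j
        · simp at h
        · exact braidSemidirect_braid
        · exact braidSemidirect_braid.symm
        · simp at h)

def braidCommutatorHom : FreeGroup Bool →* BraidGroup 3 :=
  FreeGroup.lift fun i => if i then σ₁ * σ₂ * σ₁⁻¹ * σ₁⁻¹ else σ₂ * σ₁⁻¹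

@[simp] lemma braidCommutatorHom_of_false : braidCommutatorHom (.of false) = σ₂ * σ₁⁻¹ := by
  simp [braidCommutatorHom]

@[simp] lemma braidCommutatorHom_of_true :
    braidCommutatorHom (.of true) = σ₁ * σ₂ * σ₁⁻¹ * σ₁⁻¹ := by
  simp [braidCommutatorHom]

lemma braidCommutatorHom_braidAut (x : FreeGroup Bool) :
    braidCommutatorHom (braidAut x) = σ₁ * braidCommutatorHom x * σ₁⁻¹ := by
  suffices braidCommutatorHom.comp braidAut.toMonoidHom =
      (MulAut.conj σ₁).toMonoidHom.comp braidCommutatorHom from DFunLike.congr_fun this x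
  ext i
  cases i
  · simp only [MonoidHom.comp_apply, MulEquiv.coe_toMonoidHom, braidAut_of_false,
      braidCommutatorHom_of_true, braidCommutatorHom_of_false, MulAut.conj_apply]
    group
  · simp only [MonoidHom.comp_apply, MulEquiv.coe_toMonoidHom, braidAut_of_true, map_mul, map_inv,
      braidCommutatorHom_of_true, braidCommutatorHom_of_false, MulAut.conj_apply]
    rw [show (σ₂ * σ₁⁻¹)⁻¹ * (σ₁ * σ₂ * σ₁⁻¹ * σ₁⁻¹) = σ₁ * (σ₂⁻¹ * σ₁ * σ₂) * σ₁⁻¹ * σ₁⁻¹ by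
      group, inv_mul_mul_eq_of_braid σ₁_mul_σ₂_mul_σ₁]
    group

def ofBraidSemidirect : BraidSemidirect →* BraidGroup 3 :=
  SemidirectProduct.lift braidCommutatorHom (zpowersHom _ σ₁) fun z => by
    refine MonoidHom.ext fun x => ?_
    simpa [map_zpow] using
      braidCommutatorHom.apply_zpow_apply (β := MulAut.conj σ₁) braidCommutatorHom_braidAut
        (toAdd z) x

lemma toBraidSemidirect_σ₁ : toBraidSemidirect σ₁ = inr (ofAdd 1) :=
  PresentedGroup.toGroup.of _

lemma toBraidSemidirect_σ₂ : toBraidSemidirect σ₂ = inl (.of false) * inr (ofAdd 1) :=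
  PresentedGroup.toGroup.of _

noncomputable def braidGroupThreeEquiv : BraidGroup 3 ≃* BraidSemidirect :=
  MonoidHom.toMulEquiv toBraidSemidirect ofBraidSemidirect
    (PresentedGroup.ext fun i => by
      fin_cases i
      · change ofBraidSemidirect (toBraidSemidirect σ₁) = σ₁
        simp [toBraidSemidirect_σ₁, ofBraidSemidirect]
      · change ofBraidSemidirect (toBraidSemidirect σ₂) = σ₂
        simp [toBraidSemidirect_σ₂, ofBraidSemidirect])
    (by
      refine SemidirectProduct.hom_ext (FreeGroup.ext_hom _ _ fun i => ?_) (MonoidHom.ext_mint ?_)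
      · cases i
        · simp [ofBraidSemidirect, toBraidSemidirect_σ₁, toBraidSemidirect_σ₂]
        · simp only [MonoidHom.comp_apply, ofBraidSemidirect, lift_inl, braidCommutatorHom_of_true,
            map_mul, map_inv, toBraidSemidirect_σ₁, toBraidSemidirect_σ₂]
          ext <;> simp
      · simp [ofBraidSemidirect, toBraidSemidirect_σ₁])

lemma commutator_braidSemidirect :
    commutator BraidSemidirect = (inl : FreeGroup Bool →* BraidSemidirect).range := by
  refine le_antisymm commutator_le_range_inl ?_
  rw [MonoidHom.range_eq_map, ← FreeGroup.closure_range_of, MonoidHom.map_closure,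
    Subgroup.closure_le]
  rintro _ ⟨_, ⟨i, rfl⟩, rfl⟩
  have ha : inl (.of false) ∈ commutator BraidSemidirect := by
    simpa using inl_apply_mul_inv_mem_commutator (φ := zpowersHom _ braidAut) (ofAdd 1) (.of true)
  have hba : inl (.of true * (.of false)⁻¹) ∈ commutator BraidSemidirect := by
    simpa using inl_apply_mul_inv_mem_commutator (φ := zpowersHom _ braidAut) (ofAdd 1) (.of false)
  cases i
  · exact ha
  · simpa using mul_mem hba ha

noncomputable def commutatorBraidGroupThreeEquiv : commutator (BraidGroup 3) ≃* FreeGroup Bool :=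
  (braidGroupThreeEquiv.subgroupMap _).trans <|
    (MulEquiv.subgroupCongr (by rw [MulEquiv.map_commutator, commutator_braidSemidirect])).trans
      (MonoidHom.ofInjective inl_injective).symm

/-- The commutator subgroup of the braid group on 3 strands has exactly thirteen subgroups
of index 3. -/
theorem K3_subgroups_index_three :
    Nat.card {H : Subgroup ↥(commutator (BraidGroup 3)) // H.index = 3} = 13 := by
  have hcount : Nat.card {H : Subgroup (FreeGroup Bool) // H.index = 3} * 2 = 26 :=
    (card_isTransitiveHom (FreeGroup Bool) 2).symm.trans
      card_isTransitiveHom_freeGroup_bool_fin_three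
  rw [commutatorBraidGroupThreeEquiv.card_subgroup_index_eq]
  omega
end
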